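/- arXiv:2012.11626 — 6 statements merged into one kernel-verified Lean document; each statement's English description precedes it below -/
import Mathlib

section
/- For any partition τ of {0,…,d−1} into blocks of consecutive integers, the matrix M^τ maps the set S(d) of non-increasing probability vectors into itself: if p ∈ S(d) then M^τ p ∈ S(d). -/
open scoped Classical
open Matrix

def IsConsecPartition {d : ℕ} (P : Fin d → Fin d → Prop) : Prop :=
  (∀ i, P i i) ∧ (∀ i j, P i j → P j i) ∧ (∀ i j k, P i j → P j k → P i k) ∧
  (∀ i j k : Fin d, i ≤ j → j ≤ k → P i k → P i j)

noncomputable def blockMat {d : ℕ} (P : Fin d → Fin d → Prop) :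
    Matrix (Fin d) (Fin d) ℝ :=
  fun i j => if P i j then 1 / ((Finset.univ.filter (fun k => P i k)).card : ℝ) else 0

/-- The set of non-increasing probability vectors of dimension `d`. -/
def NonIncrProb (d : ℕ) : Set (Fin d → ℝ) :=
  {p | (∀ i, 0 ≤ p i) ∧ (∑ i, p i = 1) ∧ (∀ i j : Fin d, i ≤ j → p j ≤ p i)}

noncomputable def Bl {d : ℕ} (P : Fin d → Fin d → Prop) (i : Fin d) : Finset (Fin d) :=
  Finset.univ.filter fun k => P i k

lemma Bl_card_pos {d : ℕ} {P : Fin d → Fin d → Prop} (hP : IsConsecPartition P) (i : Fin d) :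
    0 < (Bl P i).card :=
  Finset.card_pos.2 ⟨i, by simp [Bl, hP.1 i]⟩

lemma Bl_eq {d : ℕ} {P : Fin d → Fin d → Prop} (hP : IsConsecPartition P) {i j : Fin d}
    (h : P i j) : Bl P i = Bl P j := by
  obtain ⟨hr, hs, ht, _⟩ := hP
  ext k
  simp only [Bl, Finset.mem_filter, Finset.mem_univ, true_and]
  exact ⟨fun hik => ht _ _ _ (hs _ _ h) hik, fun hjk => ht _ _ _ h hjk⟩

lemma blockMat_mulVec_eq {d : ℕ} (P : Fin d → Fin d → Prop) (p : Fin d → ℝ) (i : Fin d) :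
    (blockMat P).mulVec p i = (∑ j ∈ Bl P i, p j) / ((Bl P i).card : ℝ) := by
  have h1 : ∀ j, blockMat P i j * p j
      = (if P i j then p j else 0) / ((Bl P i).card : ℝ) := by
    intro j
    simp only [blockMat, Bl]
    split <;> simp [div_eq_mul_inv, mul_comm]
  simp only [Matrix.mulVec, dotProduct, h1, ← Finset.sum_div]
  congr 1
  rw [Bl, Finset.sum_filter]

lemma key_le {d : ℕ} {P : Fin d → Fin d → Prop} (hP : IsConsecPartition P)
    {i j a b : Fin d} (hij : i ≤ j) (hnij : ¬ P i j) (ha : P i a) (hb : P j b) : a ≤ b := by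
  obtain ⟨hr, hs, ht, hconv⟩ := hP
  by_contra h
  push_neg at h
  rcases le_or_gt i b with hib | hbi
  · exact hnij (ht _ _ _ (hconv i b a hib h.le ha) (hs _ _ hb))
  · exact hnij (ht _ _ _ (hs _ _ (hconv b i j hbi.le hij (hs _ _ hb))) (hs _ _ hb))

theorem blockMat_maps_nonIncrProb {d : ℕ} (P : Fin d → Fin d → Prop)
    (hP : IsConsecPartition P) (p : Fin d → ℝ) (hp : p ∈ NonIncrProb d) :
    (blockMat P).mulVec p ∈ NonIncrProb d := by
  obtain ⟨hp0, hp1, hpm⟩ := hp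
  have hcpos : ∀ i, (0:ℝ) < ((Bl P i).card : ℝ) := fun i => by
    exact_mod_cast Bl_card_pos hP i
  refine ⟨?_, ?_, ?_⟩
  · intro i
    rw [blockMat_mulVec_eq]
    exact div_nonneg (Finset.sum_nonneg fun j _ => hp0 j) (hcpos i).le
  · -- sum = 1
    have hcol : ∀ j : Fin d, (∑ i, blockMat P i j) = 1 := by
      intro j
      have h1 : ∀ i : Fin d, blockMat P i j
          = if P j i then 1 / ((Bl P j).card : ℝ) else 0 := by
        intro i
        simp only [blockMat]
        by_cases h : P i j
        · rw [if_pos h, if_pos (hP.2.1 _ _ h)]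
          rw [show (Finset.univ.filter fun k => P i k) = Bl P j from Bl_eq hP h]
        · rw [if_neg h, if_neg (fun h' => h (hP.2.1 _ _ h'))]
      simp only [h1]
      rw [← Finset.sum_filter, Finset.sum_const, nsmul_eq_mul]
      show ((Bl P j).card : ℝ) * (1 / ((Bl P j).card : ℝ)) = 1
      field_simp
      exact div_self (hcpos j).ne'
    calc ∑ i, (blockMat P).mulVec p i
        = ∑ j, (∑ i, blockMat P i j) * p j := by
          simp only [Matrix.mulVec, dotProduct]
          rw [Finset.sum_comm]
          simp [Finset.sum_mul]
      _ = ∑ j, p j := by simp [hcol]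
      _ = 1 := hp1
  · intro i j hij
    rw [blockMat_mulVec_eq, blockMat_mulVec_eq]
    by_cases hpij : P i j
    · rw [Bl_eq hP hpij]
    · rw [div_le_div_iff₀ (hcpos j) (hcpos i)]
      have key : ∀ a ∈ Bl P i, ∀ b ∈ Bl P j, p b ≤ p a := by
        intro a ha b hb
        simp only [Bl, Finset.mem_filter, Finset.mem_univ, true_and] at ha hb
        exact hpm a b (key_le hP hij hpij ha hb)
      calc (∑ b ∈ Bl P j, p b) * ((Bl P i).card : ℝ)
          = ∑ b ∈ Bl P j, ∑ _a ∈ Bl P i, p b := by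
            simp [Finset.sum_mul, mul_comm]
        _ ≤ ∑ b ∈ Bl P j, ∑ a ∈ Bl P i, p a := by
            refine Finset.sum_le_sum fun b hb => Finset.sum_le_sum fun a ha => key a ha b hb
        _ = (∑ a ∈ Bl P i, p a) * ((Bl P j).card : ℝ) := by
            simp [mul_comm]
end

section
/- Any convex combination of the matrices {M^τ : τ a partition of {0,…,d−1} into consecutive blocks} maps the set of non-increasing probability vectors into itself. -/
open scoped Classical
open Matrix

section Aux

variable {d : ℕ}

lemma block_eq {P : Fin d → Fin d → Prop} (hP : IsConsecPartition P) {i j : Fin d}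
    (hij : P i j) :
    (Finset.univ.filter (fun k => P i k)) = (Finset.univ.filter (fun k => P j k)) := by
  ext k
  simp only [Finset.mem_filter, Finset.mem_univ, true_and]
  exact ⟨fun h => hP.2.2.1 j i k (hP.2.1 i j hij) h, fun h => hP.2.2.1 i j k hij h⟩

lemma block_card_pos {P : Fin d → Fin d → Prop} (hP : IsConsecPartition P) (i : Fin d) :
    0 < ((Finset.univ.filter (fun k => P i k)).card : ℝ) := by
  have : i ∈ Finset.univ.filter (fun k => P i k) := by simp [hP.1 i]
  exact_mod_cast Finset.card_pos.2 ⟨i, this⟩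

lemma blockMat_mulVec_apply {P : Fin d → Fin d → Prop} (p : Fin d → ℝ) (i : Fin d) :
    (blockMat P).mulVec p i
      = (∑ k ∈ Finset.univ.filter (fun k => P i k), p k)
          / ((Finset.univ.filter (fun k => P i k)).card : ℝ) := by
  unfold Matrix.mulVec dotProduct blockMat
  simp only [ite_mul, zero_mul]
  rw [← Finset.sum_filter, Finset.sum_div]
  exact Finset.sum_congr rfl (fun j hj => by
    rw [div_mul_eq_mul_div, one_mul])

lemma colsum {P : Fin d → Fin d → Prop} (hP : IsConsecPartition P) (j : Fin d) :
    ∑ i, blockMat P i j = 1 := by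
  have hc := block_card_pos hP j
  have : ∀ i, blockMat P i j
      = if P j i then 1 / ((Finset.univ.filter (fun k => P j k)).card : ℝ) else 0 := by
    intro i
    unfold blockMat
    by_cases h : P i j
    · rw [if_pos h, if_pos (hP.2.1 i j h), block_eq hP h]
    · rw [if_neg h, if_neg (fun h' => h (hP.2.1 j i h'))]
  rw [Finset.sum_congr rfl (fun i _ => this i), ← Finset.sum_filter]
  simp only [Finset.sum_const, nsmul_eq_mul]
  field_simp

lemma blockMat_mem {P : Fin d → Fin d → Prop} (hP : IsConsecPartition P)
    {p : Fin d → ℝ} (hp : p ∈ NonIncrProb d) :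
    (blockMat P).mulVec p ∈ NonIncrProb d := by
  obtain ⟨hnn, hsum, hmono⟩ := hp
  refine ⟨?_, ?_, ?_⟩
  · intro i
    rw [blockMat_mulVec_apply]
    exact div_nonneg (Finset.sum_nonneg fun k _ => hnn k) (le_of_lt (block_card_pos hP i))
  · unfold Matrix.mulVec dotProduct
    rw [Finset.sum_comm]
    calc ∑ j, ∑ i, blockMat P i j * p j
        = ∑ j, (∑ i, blockMat P i j) * p j := by simp [Finset.sum_mul]
      _ = ∑ j, p j := by simp [colsum hP]
      _ = 1 := hsum
  · intro i j hij
    rw [blockMat_mulVec_apply, blockMat_mulVec_apply]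
    by_cases h : P i j
    · rw [block_eq hP h]
    · set A := Finset.univ.filter (fun k => P i k) with hA
      set B := Finset.univ.filter (fun k => P j k) with hB
      have hAne : i ∈ A := by simp [hA, hP.1 i]
      have hBne : j ∈ B := by simp [hB, hP.1 j]
      have hAB : ∀ a ∈ A, ∀ b ∈ B, a ≤ b := by
        intro a ha b hb
        have hPa : P i a := (Finset.mem_filter.1 ha).2
        have hPb : P j b := (Finset.mem_filter.1 hb).2
        by_contra hba
        push_neg at hba
        by_cases hbi : i ≤ b
        · -- i ≤ b ≤ a, P i a ⇒ P i b ⇒ P i j, contradiction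
          have h1 : P i b := hP.2.2.2 i b a hbi (le_of_lt hba) hPa
          exact h (hP.2.2.1 i b j h1 (hP.2.1 j b hPb))
        · push_neg at hbi
          -- b < i ≤ j, P b j ⇒ P b i ⇒ P i j, contradiction
          have h1 : P b i := hP.2.2.2 b i j (le_of_lt hbi) hij (hP.2.1 j b hPb)
          exact h (hP.2.2.1 i b j (hP.2.1 b i h1) (hP.2.1 j b hPb))
      have hBne' : B.Nonempty := ⟨j, hBne⟩
      set b0 := B.min' hBne' with hb0
      have hlo : ∀ a ∈ A, p b0 ≤ p a := fun a ha =>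
        hmono a b0 (hAB a ha b0 (B.min'_mem hBne'))
      have hhi : ∀ b ∈ B, p b ≤ p b0 := fun b hb =>
        hmono b0 b (B.min'_le b hb)
      have hAc : 0 < (A.card : ℝ) := block_card_pos hP i
      have hBc : 0 < (B.card : ℝ) := block_card_pos hP j
      have h1 : (∑ k ∈ B, p k) / (B.card : ℝ) ≤ p b0 := by
        rw [div_le_iff₀ hBc]
        calc ∑ k ∈ B, p k ≤ B.card • p b0 := Finset.sum_le_card_nsmul B p (p b0) (fun x hx => hhi x hx)
          _ = p b0 * (B.card : ℝ) := by simp [nsmul_eq_mul, mul_comm]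
      have h2 : p b0 ≤ (∑ k ∈ A, p k) / (A.card : ℝ) := by
        rw [le_div_iff₀ hAc]
        calc p b0 * (A.card : ℝ) = A.card • p b0 := by simp [nsmul_eq_mul, mul_comm]
          _ ≤ ∑ k ∈ A, p k := Finset.card_nsmul_le_sum A p (p b0) (fun x hx => hlo x hx)
      exact h1.trans h2

end Aux

theorem convexComb_blockMat_maps_nonIncrProb {d : ℕ} {ι : Type*} (s : Finset ι)
    (P : ι → Fin d → Fin d → Prop) (hP : ∀ t ∈ s, IsConsecPartition (P t))
    (α : ι → ℝ) (hα : ∀ t ∈ s, 0 ≤ α t) (hαsum : ∑ t ∈ s, α t = 1)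
    (p : Fin d → ℝ) (hp : p ∈ NonIncrProb d) :
    (∑ t ∈ s, α t • blockMat (P t)).mulVec p ∈ NonIncrProb d := by
  have key : ∀ t ∈ s, (blockMat (P t)).mulVec p ∈ NonIncrProb d :=
    fun t ht => blockMat_mem (hP t ht) hp
  have hrw : ∀ i, (∑ t ∈ s, α t • blockMat (P t)).mulVec p i
      = ∑ t ∈ s, α t * ((blockMat (P t)).mulVec p i) := by
    intro i
    unfold Matrix.mulVec dotProduct
    simp only [Matrix.sum_apply, Matrix.smul_apply, smul_eq_mul, Finset.sum_mul]
    rw [Finset.sum_comm]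
    simp [Finset.mul_sum, mul_assoc]
  refine ⟨?_, ?_, ?_⟩
  · intro i
    rw [hrw]
    exact Finset.sum_nonneg fun t ht => mul_nonneg (hα t ht) ((key t ht).1 i)
  · calc ∑ i, (∑ t ∈ s, α t • blockMat (P t)).mulVec p i
        = ∑ i, ∑ t ∈ s, α t * ((blockMat (P t)).mulVec p i) := by
          exact Finset.sum_congr rfl fun i _ => hrw i
      _ = ∑ t ∈ s, ∑ i, α t * ((blockMat (P t)).mulVec p i) := Finset.sum_comm
      _ = ∑ t ∈ s, α t * ∑ i, (blockMat (P t)).mulVec p i := by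
          simp [Finset.mul_sum]
      _ = ∑ t ∈ s, α t := by
          exact Finset.sum_congr rfl fun t ht => by rw [(key t ht).2.1, mul_one]
      _ = 1 := hαsum
  · intro i j hij
    rw [hrw, hrw]
    exact Finset.sum_le_sum fun t ht =>
      mul_le_mul_of_nonneg_left ((key t ht).2.2 i j hij) (hα t ht)
end

section
/- For non-increasing probability vectors x, y ∈ S(d), if there exists a Hoffman matrix R (a symmetric doubly stochastic matrix satisfying R_{i,j} + R_{i−1,j+1} ≥ R_{i−1,j} + R_{i,j+1} for all i ≤ j) such that x = R y, then x is majorized by y, i.e., ∑_{i=0}^k x_i ≤ ∑_{i=0}^k y_i for all k < d−1 with equality at k = d−1. -/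
open Matrix

/-- A Hoffman matrix: symmetric doubly stochastic with the supermodularity
condition `R_{i,j} + R_{i−1,j+1} ≥ R_{i−1,j} + R_{i,j+1}` for all `i ≤ j`. -/
def IsHoffman {d : ℕ} (R : Matrix (Fin d) (Fin d) ℝ) : Prop :=
  (∀ i j, 0 ≤ R i j) ∧ (∀ i, ∑ j, R i j = 1) ∧ (∀ i j, R i j = R j i) ∧
  (∀ i j : Fin d, i ≤ j → ∀ (hi : 0 < (i : ℕ)) (hj : (j : ℕ) + 1 < d),
    R ⟨(i : ℕ) - 1, lt_trans (Nat.sub_lt hi one_pos) i.isLt⟩ j + R i ⟨(j : ℕ) + 1, hj⟩ ≤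
    R i j + R ⟨(i : ℕ) - 1, lt_trans (Nat.sub_lt hi one_pos) i.isLt⟩ ⟨(j : ℕ) + 1, hj⟩)

theorem hoffman_implies_majorization {d : ℕ} (x y : Fin d → ℝ)
    (hx : x ∈ NonIncrProb d) (hy : y ∈ NonIncrProb d)
    (R : Matrix (Fin d) (Fin d) ℝ) (hR : IsHoffman R) (hxy : x = R.mulVec y) :
    (∀ k : Fin d, ∑ i ∈ Finset.Iic k, x i ≤ ∑ i ∈ Finset.Iic k, y i) ∧
    ∑ i, x i = ∑ i, y i := by
  obtain ⟨hy0, hy1, hymono⟩ := hy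
  obtain ⟨hx0, hx1, _⟩ := hx
  obtain ⟨hR0, hRrow, hRsym, _⟩ := hR
  refine ⟨?_, by rw [hx1, hy1]⟩
  intro k
  have hcol : ∀ j, ∑ i, R i j = 1 := fun j => by
    rw [Finset.sum_congr rfl fun i _ => hRsym i j]; exact hRrow j
  set c : Fin d → ℝ := fun j => ∑ i ∈ Finset.Iic k, R i j with hc
  have hc1 : ∀ j, c j ≤ 1 := fun j => by
    rw [← hcol j]
    exact Finset.sum_le_sum_of_subset_of_nonneg (Finset.subset_univ _)
      (fun i _ _ => hR0 i j)
  have hc0 : ∀ j, 0 ≤ c j := fun j => Finset.sum_nonneg fun i _ => hR0 i j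
  have hsum : ∑ i ∈ Finset.Iic k, x i = ∑ j, c j * y j := by
    subst hxy
    simp only [Matrix.mulVec, dotProduct, hc]
    rw [Finset.sum_comm]
    simp [Finset.sum_mul]
  have hind : ∑ j, (if j ≤ k then (1:ℝ) else 0) = ∑ j ∈ Finset.Iic k, (1:ℝ) := by
    rw [← Finset.sum_filter]
    congr 1
    ext j
    simp [Finset.mem_Iic]
  have hcsum : ∑ j, c j = ∑ j, (if j ≤ k then (1:ℝ) else 0) := by
    rw [hind]
    simp only [hc]
    rw [Finset.sum_comm]
    simp [hRrow]
  have hindy : ∑ j, (if j ≤ k then (1:ℝ) else 0) * y j = ∑ j ∈ Finset.Iic k, y j := by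
    simp only [ite_mul, one_mul, zero_mul]
    rw [← Finset.sum_filter]
    congr 1
    ext j
    simp [Finset.mem_Iic]
  have key : ∑ j, (c j - if j ≤ k then (1:ℝ) else 0) * (y j - y k) ≤ 0 := by
    apply Finset.sum_nonpos
    intro j _
    by_cases hjk : j ≤ k
    · simp only [hjk, if_pos]
      exact mul_nonpos_of_nonpos_of_nonneg (by linarith [hc1 j])
        (by linarith [hymono j k hjk])
    · simp only [hjk, if_neg, not_false_iff]
      have : k ≤ j := le_of_not_ge hjk
      exact mul_nonpos_of_nonneg_of_nonpos (by linarith [hc0 j])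
        (by linarith [hymono k j this])
  have expand : ∑ j, (c j - if j ≤ k then (1:ℝ) else 0) * (y j - y k)
      = (∑ j, c j * y j) - (∑ j, (if j ≤ k then (1:ℝ) else 0) * y j)
        - y k * ((∑ j, c j) - ∑ j, (if j ≤ k then (1:ℝ) else 0)) := by
    rw [← Finset.sum_sub_distrib, ← Finset.sum_sub_distrib, Finset.mul_sum,
      ← Finset.sum_sub_distrib]
    exact Finset.sum_congr rfl fun j _ => by ring
  rw [hsum]
  rw [expand, hcsum, sub_self, mul_zero, sub_zero, hindy] at key
  linarith
end

section
/- Let p ≺_h q be 2-dimensional non-increasing probability vectors with p_1 > 0, and let a ∈ [1/2, 1] satisfy p = R q with R = [[a,1−a],[1−a,a]]. Then the pair of Kraus operators L₁ = diag(√(a q_0/p_0), √(a q_1/p_1)) and L₂ with entries (L₂)_{0,1} = √((1−a) q_0/p_1), (L₂)_{1,0} = √((1−a) q_1/p_0) satisfies L₁†L₁ + L₂†L₂ = I, and the induced CPTP map Φ sends the pure state |ψ⟩ = √p_0|0⟩ + √p_1|1⟩ to |φ⟩ = √q_0|0⟩ + √q_1|1⟩, i.e., Φ(|ψ⟩⟨ψ|)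 = |φ⟩⟨φ|. -/
/-!
With `ψ = √p` and `φ = √q`, the Kraus operators act on `ψ` as `L₁ ψ = √a • φ` and
`L₂ ψ = √(1 - a) • φ`, so `Φ(ψ ψᵀ) = (a + (1 - a)) • φ φᵀ = φ φᵀ`. The completeness relation
`L₁ᵀ L₁ + L₂ᵀ L₂` is diagonal with entries `(a q₀ + (1 - a) q₁) / p₀` and `((1 - a) q₀ + a q₁) / p₁`,
which are `1` precisely because `p = R q`.
-/

open Matrix

theorem Matrix.mul_vecMulVec_self_mul_transpose {m n R : Type*} [Fintype n] [CommSemiring R]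
    (L : Matrix m n R) (v : n → R) :
    L * vecMulVec v v * Lᵀ = vecMulVec (L *ᵥ v) (L *ᵥ v) := by
  rw [mul_vecMulVec, vecMulVec_mul, vecMul_transpose]

theorem kraus_pair_vecMulVec_eq {m n R : Type*} [Fintype n] [CommSemiring R]
    {L₁ L₂ : Matrix m n R} {ψ : n → R} {φ : m → R} {s c : R}
    (h₁ : L₁ *ᵥ ψ = s • φ) (h₂ : L₂ *ᵥ ψ = c • φ) (hsc : s * s + c * c = 1) :
    L₁ * vecMulVec ψ ψ * L₁ᵀ + L₂ * vecMulVec ψ ψ * L₂ᵀ = vecMulVec φ φ := by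
  simp only [mul_vecMulVec_self_mul_transpose, h₁, h₂, smul_vecMulVec, vecMulVec_smul, smul_smul,
    ← add_smul, hsc, one_smul]

theorem Matrix.transpose_mul_self_add_fin_two {R : Type*} [CommRing R] (d₀ d₁ e₀ e₁ : R) :
    !![d₀, 0; 0, d₁]ᵀ * !![d₀, 0; 0, d₁] + !![0, e₀; e₁, 0]ᵀ * !![0, e₀; e₁, 0] =
      !![d₀ * d₀ + e₁ * e₁, 0; 0, d₁ * d₁ + e₀ * e₀] := by
  ext i j
  fin_cases i <;> fin_cases j <;> simp [mul_apply, Fin.sum_univ_two]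

theorem Real.sqrt_div_mul_sqrt (x : ℝ) {y : ℝ} (hy : 0 < y) : √(x / y) * √y = √x := by
  rw [← Real.sqrt_mul' _ hy.le, div_mul_cancel₀ _ hy.ne']

section
variable {p q : Fin 2 → ℝ} {c : ℝ}

theorem diag_sqrt_mulVec_sqrt (hp₀ : 0 < p 0) (hp₁ : 0 < p 1) (hc : 0 ≤ c) :
    !![√(c * q 0 / p 0), 0; 0, √(c * q 1 / p 1)] *ᵥ (fun i => √(p i)) =
      √c • fun i => √(q i) := by
  ext i
  fin_cases i <;> simp [mulVec, dotProduct, Fin.sum_univ_two, Real.sqrt_div_mul_sqrt, hp₀, hp₁,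
    Real.sqrt_mul hc]

theorem antidiag_sqrt_mulVec_sqrt (hp₀ : 0 < p 0) (hp₁ : 0 < p 1) (hc : 0 ≤ c) :
    !![0, √(c * q 0 / p 1); √(c * q 1 / p 0), 0] *ᵥ (fun i => √(p i)) =
      √c • fun i => √(q i) := by
  ext i
  fin_cases i <;> simp [mulVec, dotProduct, Fin.sum_univ_two, Real.sqrt_div_mul_sqrt, hp₀, hp₁,
    Real.sqrt_mul hc]

end

theorem kraus_pure_state_transformation_general (p q : Fin 2 → ℝ)
    (hp : 0 < p 1) (hp01 : p 1 ≤ p 0)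
    (hq1 : 0 ≤ q 1) (hq01 : q 1 ≤ q 0)
    (a : ℝ) (ha : 1 / 2 ≤ a) (ha1 : a ≤ 1)
    (hR : (fun i => (!![a, 1 - a; 1 - a, a]).mulVec q i) = p)
    (L₁ L₂ : Matrix (Fin 2) (Fin 2) ℝ)
    (hL₁ : L₁ = !![Real.sqrt (a * q 0 / p 0), 0; 0, Real.sqrt (a * q 1 / p 1)])
    (hL₂ : L₂ = !![0, Real.sqrt ((1 - a) * q 0 / p 1);
                   Real.sqrt ((1 - a) * q 1 / p 0), 0]) :
    L₁ᵀ * L₁ + L₂ᵀ * L₂ = 1 ∧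
    (L₁ * vecMulVec (fun i => Real.sqrt (p i)) (fun i => Real.sqrt (p i)) * L₁ᵀ +
     L₂ * vecMulVec (fun i => Real.sqrt (p i)) (fun i => Real.sqrt (p i)) * L₂ᵀ) =
      vecMulVec (fun i => Real.sqrt (q i)) (fun i => Real.sqrt (q i)) := by
  have hp0 : 0 < p 0 := hp.trans_le hp01
  have hq0 : 0 ≤ q 0 := hq1.trans hq01
  have ha0 : 0 ≤ a := by linarith
  have ha1' : 0 ≤ 1 - a := sub_nonneg.2 ha1
  have hR0 : a * q 0 + (1 - a) * q 1 = p 0 := by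
    simpa [mulVec, dotProduct, Fin.sum_univ_two] using congrFun hR 0
  have hR1 : (1 - a) * q 0 + a * q 1 = p 1 := by
    simpa [mulVec, dotProduct, Fin.sum_univ_two] using congrFun hR 1
  subst hL₁ hL₂
  refine ⟨?_, kraus_pair_vecMulVec_eq (diag_sqrt_mulVec_sqrt hp0 hp ha0)
    (antidiag_sqrt_mulVec_sqrt hp0 hp ha1') ?_⟩
  · rw [transpose_mul_self_add_fin_two, one_fin_two]
    have hnn : ∀ {x y z : ℝ}, 0 ≤ x → 0 ≤ y → 0 < z → 0 ≤ x * y / z :=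
      fun hx hy hz => div_nonneg (mul_nonneg hx hy) hz.le
    rw [Real.mul_self_sqrt (hnn ha0 hq0 hp0), Real.mul_self_sqrt (hnn ha1' hq1 hp0),
      Real.mul_self_sqrt (hnn ha0 hq1 hp), Real.mul_self_sqrt (hnn ha1' hq0 hp), ← add_div,
      ← add_div, hR0, add_comm, hR1, div_self hp0.ne', div_self hp.ne']
  · rw [Real.mul_self_sqrt ha0, Real.mul_self_sqrt ha1', add_sub_cancel]

theorem kraus_pure_state_transformation (p q : Fin 2 → ℝ)
    (hp : 0 < p 1) (hp01 : p 1 ≤ p 0) (hpsum : p 0 + p 1 = 1)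
    (hq1 : 0 ≤ q 1) (hq01 : q 1 ≤ q 0) (hqsum : q 0 + q 1 = 1)
    (a : ℝ) (ha : 1 / 2 ≤ a) (ha1 : a ≤ 1)
    (hR : (fun i => (!![a, 1 - a; 1 - a, a]).mulVec q i) = p)
    (L₁ L₂ : Matrix (Fin 2) (Fin 2) ℝ)
    (hL₁ : L₁ = !![Real.sqrt (a * q 0 / p 0), 0; 0, Real.sqrt (a * q 1 / p 1)])
    (hL₂ : L₂ = !![0, Real.sqrt ((1 - a) * q 0 / p 1);
                   Real.sqrt ((1 - a) * q 1 / p 0), 0]) :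
    L₁ᵀ * L₁ + L₂ᵀ * L₂ = 1 ∧
    (L₁ * vecMulVec (fun i => Real.sqrt (p i)) (fun i => Real.sqrt (p i)) * L₁ᵀ +
     L₂ * vecMulVec (fun i => Real.sqrt (p i)) (fun i => Real.sqrt (p i)) * L₂ᵀ) =
      vecMulVec (fun i => Real.sqrt (q i)) (fun i => Real.sqrt (q i)) :=
  kraus_pure_state_transformation_general p q hp hp01 hq1 hq01 a ha ha1 hR L₁ L₂ hL₁ hL₂
end

section
/- With the same map Φ as above (qubit, Kraus operators L₁, L₂ built from a Hoffman 2×2 matrix with a ≥ 1/2 and p = R q), Φ is passivity-preserving: if ρ = r_0|0⟩⟨0| + r_1|1⟩⟨1| with r_0 ≥ r_1 ≥ 0, r_0 + r_1 = 1, then Φ(ρ) is diagonal with its (0,0)-entry at least its (1,1)-entry. -/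
open Matrix
set_option maxHeartbeats 1000000

theorem kraus_map_passivity_preserving (p q : Fin 2 → ℝ)
    (hp : 0 < p 1) (hp01 : p 1 ≤ p 0) (hpsum : p 0 + p 1 = 1)
    (hq1 : 0 ≤ q 1) (hq01 : q 1 ≤ q 0) (hqsum : q 0 + q 1 = 1)
    (hpq : p 0 ≤ q 0)
    (a : ℝ) (ha : 1 / 2 ≤ a) (ha1 : a ≤ 1)
    (hR : (fun i => (!![a, 1 - a; 1 - a, a]).mulVec q i) = p)
    (L₁ L₂ : Matrix (Fin 2) (Fin 2) ℝ)
    (hL₁ : L₁ = !![Real.sqrt (a * q 0 / p 0), 0; 0, Real.sqrt (a * q 1 / p 1)])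
    (hL₂ : L₂ = !![0, Real.sqrt ((1 - a) * q 0 / p 1);
                   Real.sqrt ((1 - a) * q 1 / p 0), 0])
    (r : Fin 2 → ℝ) (hr1 : 0 ≤ r 1) (hr01 : r 1 ≤ r 0) (hrsum : r 0 + r 1 = 1) :
    let ρ : Matrix (Fin 2) (Fin 2) ℝ := Matrix.diagonal r
    let Φρ : Matrix (Fin 2) (Fin 2) ℝ := L₁ * ρ * L₁ᵀ + L₂ * ρ * L₂ᵀ
    Φρ 0 1 = 0 ∧ Φρ 1 0 = 0 ∧ Φρ 1 1 ≤ Φρ 0 0 := by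
  intro ρ Φρ
  have hp0 : 0 < p 0 := lt_of_lt_of_le hp hp01
  have hq0 : 0 ≤ q 0 := le_trans hq1 hq01
  have ha0 : 0 ≤ a := le_trans (by norm_num) ha
  have ha1' : 0 ≤ 1 - a := by linarith
  have hP0 : a * q 0 + (1 - a) * q 1 = p 0 := by
    have := congrFun hR 0
    simpa [Matrix.mulVec, dotProduct, Fin.sum_univ_two] using this
  have hP1 : (1 - a) * q 0 + a * q 1 = p 1 := by
    have := congrFun hR 1
    simpa [Matrix.mulVec, dotProduct, Fin.sum_univ_two] using this
  have s1 : Real.sqrt (a * q 0 / p 0) * Real.sqrt (a * q 0 / p 0) = a * q 0 / p 0 :=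
    Real.mul_self_sqrt (by positivity)
  have s2 : Real.sqrt (a * q 1 / p 1) * Real.sqrt (a * q 1 / p 1) = a * q 1 / p 1 :=
    Real.mul_self_sqrt (by positivity)
  have s3 : Real.sqrt ((1 - a) * q 0 / p 1) * Real.sqrt ((1 - a) * q 0 / p 1)
      = (1 - a) * q 0 / p 1 := Real.mul_self_sqrt (by positivity)
  have s4 : Real.sqrt ((1 - a) * q 1 / p 0) * Real.sqrt ((1 - a) * q 1 / p 0)
      = (1 - a) * q 1 / p 0 := Real.mul_self_sqrt (by positivity)
  have hsimp : ∀ i j : Fin 2, Φρ i j =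
      (L₁ * ρ * L₁ᵀ) i j + (L₂ * ρ * L₂ᵀ) i j := fun i j => rfl
  subst hL₁ hL₂
  simp only [Φρ, ρ, Matrix.add_apply, Matrix.mul_apply, Fin.sum_univ_two,
    Matrix.transpose_apply, Matrix.diagonal_apply, Matrix.cons_val', Matrix.cons_val_zero,
    Matrix.cons_val_one, Matrix.head_cons, Matrix.empty_val', Matrix.cons_val_fin_one,
    Matrix.of_apply, Matrix.head_fin_const]
  norm_num
  have e1 : Real.sqrt (a * q 0 / p 0) * r 0 * Real.sqrt (a * q 0 / p 0)
      = a * q 0 / p 0 * r 0 := by rw [mul_right_comm, s1]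
  have e2 : Real.sqrt (a * q 1 / p 1) * r 1 * Real.sqrt (a * q 1 / p 1)
      = a * q 1 / p 1 * r 1 := by rw [mul_right_comm, s2]
  have e3 : Real.sqrt ((1 - a) * q 0 / p 1) * r 1 * Real.sqrt ((1 - a) * q 0 / p 1)
      = (1 - a) * q 0 / p 1 * r 1 := by rw [mul_right_comm, s3]
  have e4 : Real.sqrt ((1 - a) * q 1 / p 0) * r 0 * Real.sqrt ((1 - a) * q 1 / p 0)
      = (1 - a) * q 1 / p 0 * r 0 := by rw [mul_right_comm, s4]
  rw [e1, e2, e3, e4, ← sub_nonneg]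
  have hX : 0 ≤ a * q 0 - (1 - a) * q 1 := by nlinarith [mul_nonneg ha1' (sub_nonneg.2 hq01), mul_nonneg (by linarith : (0:ℝ) ≤ 2 * a - 1) hq0]
  have hd : a * q 0 / p 0 * r 0 + (1 - a) * q 0 / p 1 * r 1 -
      (a * q 1 / p 1 * r 1 + (1 - a) * q 1 / p 0 * r 0) =
      ((a * q 0 - (1 - a) * q 1) * p 1 * r 0 + ((1 - a) * q 0 - a * q 1) * p 0 * r 1)
        / (p 0 * p 1) := by
    field_simp
    ring
  rw [hd]
  apply div_nonneg _ (by positivity)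
  rw [← hP0, ← hP1]
  nlinarith [mul_nonneg (sub_nonneg.2 hr01)
      (mul_nonneg hX (by nlinarith [mul_nonneg ha1' hq0, mul_nonneg ha0 hq1] : (0:ℝ) ≤ (1 - a) * q 0 + a * q 1)),
    mul_nonneg hr1 (mul_nonneg (mul_nonneg (mul_nonneg ha0 ha1') (by linarith : (0:ℝ) ≤ q 0 + q 1)) (sub_nonneg.2 hq01))]
end

section
/- Let E_0 ≤ E_1 ≤ … ≤ E_{d−1} be positive reals and α > 0. If p ≺_h q for non-increasing probability vectors p, q, then ∑_i p_i² E_i^{−α} ≤ ∑_i q_i² E_i^{−α}; equivalently the monotone A_α(p) = E_0^{−α} − ∑_i p_i² E_i^{−α} satisfies A_α(q) ≤ A_α(p). -/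
open Finset

lemma abel_nonneg (n : ℕ) (a b : ℕ → ℝ)
    (hA : ∀ k, k < n → 0 ≤ ∑ i ∈ Finset.range (k + 1), a i)
    (hb : ∀ k, k < n → 0 ≤ b k)
    (hbm : ∀ k, k + 1 < n → b (k + 1) ≤ b k) :
    0 ≤ ∑ i ∈ Finset.range n, a i * b i := by
  rcases Nat.eq_zero_or_pos n with hn | hn
  · simp [hn]
  have : ∀ i, a i * b i = b i * a i := fun i => mul_comm _ _
  simp_rw [this]
  have hparts := Finset.sum_range_by_parts b a n
  simp only [smul_eq_mul] at hparts
  rw [hparts]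
  have h1 : 0 ≤ b (n - 1) * ∑ i ∈ Finset.range n, a i := by
    apply mul_nonneg
    · exact hb _ (Nat.sub_lt hn one_pos)
    · have := hA (n - 1) (Nat.sub_lt hn one_pos)
      have hn1 : n - 1 + 1 = n := by omega
      rwa [hn1] at this
  have h2 : ∑ i ∈ Finset.range (n - 1), (b (i + 1) - b i) * ∑ j ∈ Finset.range (i + 1), a j ≤ 0 := by
    apply Finset.sum_nonpos
    intro i hi
    rw [Finset.mem_range] at hi
    have hi' : i + 1 < n := by omega
    apply mul_nonpos_of_nonpos_of_nonneg
    · linarith [hbm i hi']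
    · exact hA i (by omega)
  linarith

/-- Hoffman majorization gives a family of monotones `A_α`. -/
theorem monotone_under_hoffmanMaj (d : ℕ) (E : Fin d → ℝ)
    (hEpos : ∀ i, 0 < E i) (hEmono : ∀ i j : Fin d, i ≤ j → E i ≤ E j)
    (α : ℝ) (hα : 0 < α)
    (p q : Fin d → ℝ)
    (hpnn : ∀ i, 0 ≤ p i) (hpsum : ∑ i, p i = 1)
    (hpmono : ∀ i j : Fin d, i ≤ j → p j ≤ p i)
    (hqnn : ∀ i, 0 ≤ q i) (hqsum : ∑ i, q i = 1)
    (hqmono : ∀ i j : Fin d, i ≤ j → q j ≤ q i)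
    (hmaj : ∀ k : Fin d, ∑ i ∈ Finset.Iic k, p i ≤ ∑ i ∈ Finset.Iic k, q i) :
    ∑ i, p i ^ 2 * E i ^ (-α) ≤ ∑ i, q i ^ 2 * E i ^ (-α) := by
  set w : Fin d → ℝ := fun i => E i ^ (-α) with hw
  have hwpos : ∀ i, 0 < w i := fun i => Real.rpow_pos_of_pos (hEpos i) _
  have hwmono : ∀ i j : Fin d, i ≤ j → w j ≤ w i := fun i j hij =>
    Real.rpow_le_rpow_of_nonpos (hEpos i) (hEmono i j hij) (neg_nonpos.mpr hα.le)
  -- define ℕ-indexed versions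
  set a : ℕ → ℝ := fun i => if h : i < d then q ⟨i, h⟩ - p ⟨i, h⟩ else 0 with ha
  set b : ℕ → ℝ := fun i => if h : i < d then (p ⟨i, h⟩ + q ⟨i, h⟩) * w ⟨i, h⟩ else 0 with hb
  have key : 0 ≤ ∑ i ∈ Finset.range d, a i * b i := by
    apply abel_nonneg
    · intro k hk
      have : ∑ i ∈ Finset.range (k + 1), a i
          = ∑ i ∈ Finset.Iic (⟨k, hk⟩ : Fin d), (q i - p i) := by
        apply Finset.sum_nbij' (fun i => if h : i < d then (⟨i, h⟩ : Fin d) else ⟨k, hk⟩)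
          (fun i => (i : ℕ))
        · intro i hi
          rw [Finset.mem_range] at hi
          have h : i < d := by omega
          simp only [dif_pos h, Finset.mem_Iic, Fin.mk_le_mk]
          omega
        · intro i hi
          rw [Finset.mem_Iic, Fin.le_def] at hi
          simp only [Fin.val_mk] at hi
          rw [Finset.mem_range]; omega
        · intro i hi
          rw [Finset.mem_range] at hi
          have h : i < d := by omega
          simp [h]
        · intro i hi
          simp [i.isLt]
        · intro i hi
          rw [Finset.mem_range] at hi
          have h : i < d := by omega
          simp [ha, h]
      rw [this]
      rw [Finset.sum_sub_distrib]
      linarith [hmaj ⟨k, hk⟩]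
    · intro k hk
      simp only [hb, dif_pos hk]
      exact mul_nonneg (by linarith [hpnn ⟨k, hk⟩, hqnn ⟨k, hk⟩]) (hwpos _).le
    · intro k hk
      have h1 : k < d := by omega
      simp only [hb, dif_pos hk, dif_pos h1]
      apply mul_le_mul
      · have := hpmono ⟨k, h1⟩ ⟨k + 1, hk⟩ (by simp [Fin.le_def])
        have := hqmono ⟨k, h1⟩ ⟨k + 1, hk⟩ (by simp [Fin.le_def])
        linarith
      · exact hwmono ⟨k, h1⟩ ⟨k + 1, hk⟩ (by simp [Fin.le_def])
      · exact (hwpos _).le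
      · linarith [hpnn ⟨k, h1⟩, hqnn ⟨k, h1⟩]
  have hrw : ∑ i ∈ Finset.range d, a i * b i
      = ∑ i : Fin d, (q i - p i) * ((p i + q i) * w i) := by
    rw [← Fin.sum_univ_eq_sum_range]
    apply Finset.sum_congr rfl
    intro i _
    simp [ha, hb, i.isLt]
  rw [hrw] at key
  have expand : ∀ i : Fin d, (q i - p i) * ((p i + q i) * w i)
      = q i ^ 2 * w i - p i ^ 2 * w i := fun i => by ring
  simp_rw [expand, Finset.sum_sub_distrib] at key
  linarith
end
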